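/- Let 1/2 < δ < 1 and 0 < ρ < 2 - 1/δ. Let k, N : ℕ → ℕ satisfy k(d) < d < N(d), d/N(d) → δ and k(d)/d → ρ as d → ∞. Define Δ_D(d) := binom(N(d), k(d)) · 2^{-(N(d)-k(d)-1)} · Σ_{i=0}^{N(d)-d-1} binom(N(d)-k(d)-1, i). If G(δ, ρ) < 0 then Δ_D(d) → 0 as d → ∞, and if G(δ, ρ) > 0 then Δ_D(d) → ∞ as d → ∞. -/

import Mathlib

open Filter Finset Real Topology
open scoped Nat

/-- The binary entropy function `H(x) = -x log x - (1-x) log(1-x)` (natural logarithm;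
note `Real.log 0 = 0`, so the convention `0 · log 0 = 0` is automatic). -/
noncomputable def binEnt (x : ℝ) : ℝ :=
  -x * Real.log x - (1 - x) * Real.log (1 - x)

/-- `G(x,y) = H(x) + x·H(y) - (1 - xy)·log 2`, the Donoho–Tanner exponent. -/
noncomputable def Gfun (x y : ℝ) : ℝ :=
  binEnt x + x * binEnt y - (1 - x * y) * Real.log 2

/-- `Δ_D(d) = C(N,k) · 2^{-(N-k-1)} · Σ_{i=0}^{N-d-1} C(N-k-1, i)`, which equals
`C(N,k) - E f_k(D_N)` for the Donoho–Tanner random cone `D_N`. -/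
noncomputable def DeltaD (k N : ℕ → ℕ) (d : ℕ) : ℝ :=
  ((N d).choose (k d) : ℝ) / 2 ^ (N d - k d - 1) *
    ∑ i ∈ Finset.range (N d - d), ((N d - k d - 1).choose i : ℝ)


noncomputable def stirErr (n : ℕ) : ℝ := Real.log (n !) - ((n : ℝ) * Real.log n - n)

lemma log_factorial_eq (n : ℕ) : Real.log (n !) = ((n : ℝ) * Real.log n - n) + stirErr n := by
  unfold stirErr; ring

lemma stirErr_bound : ∀ᶠ n : ℕ in atTop, 0 ≤ stirErr n ∧ stirErr n ≤ Real.log n + 3 := by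
  have h := Stirling.tendsto_stirlingSeq_sqrt_pi
  have h1 : (1:ℝ) < Real.sqrt π := by
    have : Real.sqrt 1 < Real.sqrt π := Real.sqrt_lt_sqrt (by norm_num) (by linarith [Real.pi_gt_three])
    simpa using this
  have h3 : Real.sqrt π < 3 := by
    have : Real.sqrt π < Real.sqrt 9 := Real.sqrt_lt_sqrt Real.pi_nonneg (by linarith [Real.pi_lt_d2])
    have h9 : Real.sqrt 9 = 3 := by
      rw [show (9:ℝ) = 3^2 by norm_num, Real.sqrt_sq (by norm_num)]
    linarith [h9 ▸ this]
  filter_upwards [h.eventually (Ioo_mem_nhds h1 h3), eventually_ge_atTop 1] with n hn hn1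
  have hnR : (1:ℝ) ≤ (n:ℝ) := by exact_mod_cast hn1
  have hnpos : (0:ℝ) < n := by linarith
  have hd1 : (0:ℝ) < Real.sqrt (2*n) := Real.sqrt_pos.2 (by positivity)
  have hd2 : (0:ℝ) < ((n:ℝ)/Real.exp 1)^n := by positivity
  have hspos : (0:ℝ) < Stirling.stirlingSeq n := lt_trans one_pos hn.1
  have hne : (n ! : ℝ) = Stirling.stirlingSeq n * (Real.sqrt (2*n) * ((n:ℝ)/Real.exp 1)^n) := by
    rw [Stirling.stirlingSeq]; field_simp
  have hlog : Real.log (n !) = Real.log (Stirling.stirlingSeq n) + (Real.log (2*n)/2 + ((n:ℝ) * Real.log n - n)) := by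
    rw [hne, Real.log_mul hspos.ne' (by positivity), Real.log_mul hd1.ne' hd2.ne',
      Real.log_sqrt (by positivity), Real.log_pow, Real.log_div hnpos.ne' (Real.exp_ne_zero 1),
      Real.log_exp]
    ring
  have herr : stirErr n = Real.log (Stirling.stirlingSeq n) + Real.log (2*n)/2 := by
    unfold stirErr; rw [hlog]; ring
  have hl2n : Real.log (2*n) = Real.log 2 + Real.log n := Real.log_mul two_ne_zero hnpos.ne'
  have hlogn : 0 ≤ Real.log n := Real.log_nonneg hnR
  constructor
  · rw [herr]
    have : 0 ≤ Real.log (Stirling.stirlingSeq n) := Real.log_nonneg hn.1.le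
    have : 0 ≤ Real.log (2*n) := Real.log_nonneg (by linarith)
    positivity
  · rw [herr, hl2n]
    have hs3 : Real.log (Stirling.stirlingSeq n) ≤ 2 := by
      have := Real.log_le_sub_one_of_pos hspos
      linarith [hn.2]
    have hlog2 : Real.log 2 ≤ 1 := by
      have := Real.log_le_sub_one_of_pos (show (0:ℝ) < 2 by norm_num); linarith
    linarith

lemma log_div_helper (m N : ℕ → ℕ) (hN : Tendsto N atTop atTop)
    (h : ∀ᶠ d in atTop, 1 ≤ m d ∧ m d ≤ N d) :
    Tendsto (fun d => Real.log (m d) / (N d : ℝ)) atTop (𝓝 0) := by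
  have hlogN : Tendsto (fun d => Real.log (N d) / (N d : ℝ)) atTop (𝓝 0) := by
    have h0 : Tendsto (fun x : ℝ => Real.log x / x) atTop (𝓝 0) :=
      Real.isLittleO_log_id_atTop.tendsto_div_nhds_zero
    exact h0.comp (tendsto_natCast_atTop_atTop.comp hN)
  apply tendsto_of_tendsto_of_tendsto_of_le_of_le' tendsto_const_nhds hlogN
  · filter_upwards [h] with d hd
    have h1 : (1:ℝ) ≤ (m d : ℝ) := by exact_mod_cast hd.1
    have h2 : (0:ℝ) ≤ (N d : ℝ) := by positivity
    exact div_nonneg (Real.log_nonneg h1) h2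
  · filter_upwards [h, hN.eventually_ge_atTop 1] with d hd hd1
    have hNpos : (0:ℝ) < (N d : ℝ) := by exact_mod_cast lt_of_lt_of_le Nat.zero_lt_one hd1
    have hm : (m d : ℝ) ≤ (N d : ℝ) := by exact_mod_cast hd.2
    have hm1 : (0:ℝ) < (m d : ℝ) := by exact_mod_cast hd.1
    exact div_le_div_of_nonneg_right (Real.log_le_log hm1 hm) hNpos.le


lemma stirErr_div (m N : ℕ → ℕ) (hm : Tendsto m atTop atTop) (hN : Tendsto N atTop atTop)
    (h : ∀ᶠ d in atTop, m d ≤ N d) :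
    Tendsto (fun d => stirErr (m d) / (N d : ℝ)) atTop (𝓝 0) := by
  have h1 : ∀ᶠ d in atTop, 1 ≤ m d ∧ m d ≤ N d := by
    filter_upwards [h, hm.eventually_ge_atTop 1] with d h h1; exact ⟨h1, h⟩
  have hlog := log_div_helper m N hN h1
  have h3 : Tendsto (fun d => (3:ℝ) / (N d : ℝ)) atTop (𝓝 0) :=
    tendsto_const_nhds.div_atTop (tendsto_natCast_atTop_atTop.comp hN)
  have hsum := hlog.add h3
  rw [add_zero] at hsum
  apply tendsto_of_tendsto_of_tendsto_of_le_of_le' tendsto_const_nhds hsum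
  · filter_upwards [hm.eventually stirErr_bound] with d hd
    have : (0:ℝ) ≤ (N d : ℝ) := by positivity
    exact div_nonneg hd.1 this
  · filter_upwards [hm.eventually stirErr_bound] with d hd
    have hN0 : (0:ℝ) ≤ (N d : ℝ) := by positivity
    calc stirErr (m d) / (N d : ℝ) ≤ (Real.log (m d) + 3) / (N d : ℝ) :=
          div_le_div_of_nonneg_right hd.2 hN0 |>.trans_eq rfl
      _ = Real.log (m d) / (N d : ℝ) + 3 / (N d : ℝ) := by ring

lemma binEnt_continuousAt {t : ℝ} (h0 : t ≠ 0) (h1 : t ≠ 1) : ContinuousAt binEnt t := by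
  have c1 : ContinuousAt Real.log t := Real.continuousAt_log h0
  have c2 : ContinuousAt (fun x : ℝ => Real.log (1 - x)) t := by
    have : (1:ℝ) - t ≠ 0 := sub_ne_zero.2 (Ne.symm h1)
    exact (Real.continuousAt_log this).comp (continuousAt_const.sub continuousAt_id)
  exact ((continuousAt_id.neg.mul c1).sub ((continuousAt_const.sub continuousAt_id).mul c2))

lemma f_identity {n j : ℕ} (h0 : 0 < j) (hjn : j < n) :
    ((n:ℝ) * Real.log n - n) - ((j:ℝ) * Real.log j - j)
      - (((n - j : ℕ):ℝ) * Real.log ((n - j : ℕ)) - ((n - j : ℕ):ℝ))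
      = (n:ℝ) * binEnt ((j:ℝ)/(n:ℝ)) := by
  have hcast : ((n - j : ℕ):ℝ) = (n:ℝ) - (j:ℝ) := by
    push_cast [Nat.cast_sub hjn.le]; ring
  have hx : (0:ℝ) < (j:ℝ) := by exact_mod_cast h0
  have hy : (0:ℝ) < (n:ℝ) := by exact_mod_cast h0.trans hjn
  have hyx : (0:ℝ) < (n:ℝ) - (j:ℝ) := by
    have : (j:ℝ) < (n:ℝ) := by exact_mod_cast hjn
    linarith
  rw [hcast]
  unfold binEnt
  rw [Real.log_div hx.ne' hy.ne', show (1:ℝ) - (j:ℝ)/(n:ℝ) = ((n:ℝ)-(j:ℝ))/(n:ℝ) by field_simp,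
    Real.log_div hyx.ne' hy.ne']
  field_simp
  ring

lemma choose_mono_le {M i j : ℕ} (hij : i ≤ j) (hj : 2*j ≤ M) :
    M.choose i ≤ M.choose j := by
  induction j with
  | zero => simpa [Nat.le_zero.1 hij]
  | succ j ih =>
    rcases Nat.lt_or_ge i (j+1) with h | h
    · calc M.choose i ≤ M.choose j := ih (Nat.lt_succ_iff.1 h) (by omega)
        _ ≤ M.choose (j+1) := Nat.choose_le_succ_of_lt_half_left (by omega)
    · have : i = j + 1 := le_antisymm hij h
      simp [this]

lemma log_choose_tendsto (n j N : ℕ → ℕ) (a t : ℝ) (ht0 : 0 < t) (ht1 : t < 1)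
    (hev : ∀ᶠ d in atTop, 0 < j d ∧ j d < n d ∧ n d ≤ N d)
    (hn : Tendsto n atTop atTop)
    (ha : Tendsto (fun d => (n d : ℝ) / (N d : ℝ)) atTop (𝓝 a))
    (ht : Tendsto (fun d => (j d : ℝ) / (n d : ℝ)) atTop (𝓝 t)) :
    Tendsto (fun d => Real.log (((n d).choose (j d) : ℕ)) / (N d : ℝ)) atTop
      (𝓝 (a * binEnt t)) := by
  have hN : Tendsto N atTop atTop :=
    tendsto_atTop_mono' atTop (hev.mono fun d hd => hd.2.2) hn
  have hnR : Tendsto (fun d => (n d : ℝ)) atTop atTop := tendsto_natCast_atTop_atTop.comp hn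
  -- j → ∞
  have hjlb : ∀ᶠ d in atTop, (t/2) * (n d : ℝ) ≤ (j d : ℝ) := by
    filter_upwards [ht.eventually (eventually_ge_nhds (show t/2 < t by linarith)), hn.eventually_ge_atTop 1]
      with d hd hd1
    have hnpos : (0:ℝ) < (n d : ℝ) := by exact_mod_cast hd1
    calc (t/2) * (n d : ℝ) ≤ ((j d : ℝ)/(n d : ℝ)) * (n d : ℝ) :=
          mul_le_mul_of_nonneg_right hd hnpos.le
      _ = (j d : ℝ) := by field_simp
  have hj : Tendsto j atTop atTop := by
    rw [← tendsto_natCast_atTop_iff (R := ℝ)]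
    exact tendsto_atTop_mono' atTop hjlb (hnR.const_mul_atTop (by linarith))
  -- n - j → ∞
  have hnjlb : ∀ᶠ d in atTop, ((1-t)/2) * (n d : ℝ) ≤ ((n d - j d : ℕ) : ℝ) := by
    filter_upwards [ht.eventually (eventually_le_nhds (show t < (1+t)/2 by linarith)),
      hn.eventually_ge_atTop 1, hev] with d hd hd1 hev
    have hnpos : (0:ℝ) < (n d : ℝ) := by exact_mod_cast hd1
    have hcast : ((n d - j d : ℕ):ℝ) = (n d:ℝ) - (j d:ℝ) := by
      push_cast [Nat.cast_sub hev.2.1.le]; ring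
    have : (j d : ℝ) ≤ ((1+t)/2) * (n d : ℝ) := by
      calc (j d : ℝ) = ((j d : ℝ)/(n d : ℝ)) * (n d : ℝ) := by field_simp
        _ ≤ ((1+t)/2) * (n d : ℝ) := mul_le_mul_of_nonneg_right hd hnpos.le
    rw [hcast]; nlinarith
  have hnj : Tendsto (fun d => n d - j d) atTop atTop := by
    rw [← tendsto_natCast_atTop_iff (R := ℝ)]
    exact tendsto_atTop_mono' atTop hnjlb (hnR.const_mul_atTop (by linarith))
  -- decomposition
  have hdecomp : ∀ᶠ d in atTop,
      Real.log (((n d).choose (j d) : ℕ)) / (N d : ℝ) =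
        ((n d : ℝ) / (N d : ℝ)) * binEnt ((j d : ℝ)/(n d : ℝ))
          + (stirErr (n d) - stirErr (j d) - stirErr (n d - j d)) / (N d : ℝ) := by
    filter_upwards [hev, hN.eventually_ge_atTop 1] with d hd hN1
    obtain ⟨hj0, hjn, hnN⟩ := hd
    have hNpos : (0:ℝ) < (N d : ℝ) := by exact_mod_cast hN1
    have hfac := Nat.choose_mul_factorial_mul_factorial hjn.le
    have hfacR : (((n d).choose (j d) : ℕ) : ℝ) * (j d)! * ((n d - j d)!) = ((n d)! : ℝ) := by
      exact_mod_cast congrArg (Nat.cast (R := ℝ)) hfac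
    have hc0 : (0:ℝ) < (((n d).choose (j d) : ℕ) : ℝ) := by
      exact_mod_cast Nat.choose_pos hjn.le
    have hf1 : (0:ℝ) < ((j d)! : ℝ) := by exact_mod_cast (j d).factorial_pos
    have hf2 : (0:ℝ) < (((n d - j d))! : ℝ) := by exact_mod_cast (n d - j d).factorial_pos
    have hlogs : Real.log (((n d).choose (j d) : ℕ)) =
        Real.log ((n d)!) - Real.log ((j d)!) - Real.log ((n d - j d)!) := by
      rw [← hfacR, Real.log_mul (by positivity) hf2.ne', Real.log_mul hc0.ne' hf1.ne']
      ring
    rw [hlogs, log_factorial_eq, log_factorial_eq, log_factorial_eq]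
    have hid := f_identity hj0 hjn
    field_simp
    linear_combination (f_identity hj0 hjn) * 1
  have hT1 : Tendsto (fun d => ((n d : ℝ) / (N d : ℝ)) * binEnt ((j d : ℝ)/(n d : ℝ)))
      atTop (𝓝 (a * binEnt t)) :=
    ha.mul (((binEnt_continuousAt ht0.ne' ht1.ne).tendsto).comp ht)
  have he1 := stirErr_div n N hn hN (hev.mono fun d hd => hd.2.2)
  have he2 := stirErr_div j N hj hN (hev.mono fun d hd => (hd.2.1.le.trans hd.2.2))
  have he3 := stirErr_div (fun d => n d - j d) N hnj hN
    (hev.mono fun d hd => (Nat.sub_le _ _).trans hd.2.2)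
  have hT2 : Tendsto (fun d => (stirErr (n d) - stirErr (j d) - stirErr (n d - j d)) / (N d : ℝ))
      atTop (𝓝 0) := by
    have := (he1.sub he2).sub he3
    rw [sub_zero, sub_zero] at this
    refine this.congr fun d => ?_
    simp [sub_div]
  have := hT1.add hT2
  rw [add_zero] at this
  exact this.congr' (EventuallyEq.symm hdecomp)

lemma entropy_identity {δ ρ : ℝ} (hδ0 : 0 < δ) (hδ1 : δ < 1) (hρ0 : 0 < ρ) (hρ1 : ρ < 1) :
    binEnt (ρ*δ) + (1 - ρ*δ) * binEnt ((1-δ)/(1-ρ*δ)) = binEnt δ + δ * binEnt ρ := by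
  have hA0 : 0 < ρ*δ := by positivity
  have hA1 : ρ*δ < 1 := by nlinarith
  have h1A : 0 < 1 - ρ*δ := by linarith
  have h1δ : 0 < 1 - δ := by linarith
  have h1ρ : 0 < 1 - ρ := by linarith
  have hδA : 0 < δ - ρ*δ := by nlinarith
  unfold binEnt
  rw [show (1:ℝ) - (1-δ)/(1-ρ*δ) = (δ - ρ*δ)/(1-ρ*δ) by rw [one_sub_div h1A.ne']; ring,
    Real.log_div h1δ.ne' h1A.ne', Real.log_div hδA.ne' h1A.ne',
    Real.log_mul hρ0.ne' hδ0.ne',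
    show δ - ρ*δ = δ*(1-ρ) by ring, Real.log_mul hδ0.ne' h1ρ.ne']
  field_simp
  ring


set_option maxHeartbeats 2000000 in
theorem donoho_tanner_difference_threshold (δ ρ : ℝ) (hδ : 1 / 2 < δ) (hδ1 : δ < 1)
    (hρ0 : 0 < ρ) (hρ : ρ < 2 - 1 / δ)
    (k N : ℕ → ℕ) (hkN : ∀ᶠ d in atTop, k d < d ∧ d < N d)
    (h1 : Tendsto (fun d : ℕ => (d : ℝ) / (N d : ℝ)) atTop (𝓝 δ))
    (h2 : Tendsto (fun d : ℕ => (k d : ℝ) / (d : ℝ)) atTop (𝓝 ρ)) :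
    (Gfun δ ρ < 0 → Tendsto (fun d : ℕ => DeltaD k N d) atTop (𝓝 0)) ∧
    (0 < Gfun δ ρ → Tendsto (fun d : ℕ => DeltaD k N d) atTop atTop) := by
  have hδ0 : 0 < δ := by linarith
  have hρ1 : ρ < 1 := by
    have h1δ : 1 < 1/δ := by rw [lt_div_iff₀ hδ0]; linarith
    linarith
  set A := ρ * δ with hAdef
  have hA0 : 0 < A := by positivity
  have hA2δ : A < 2*δ - 1 := by
    have h := mul_lt_mul_of_pos_right hρ hδ0
    have heq : (2 - 1/δ)*δ = 2*δ - 1 := by field_simp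
    rw [heq] at h
    exact h
  have hA1 : A < 1 := by linarith
  have hAδ : A < δ := by nlinarith
  set t := (1-δ)/(1-A) with htdef
  have h1A : 0 < 1 - A := by linarith
  have ht0 : 0 < t := div_pos (by linarith) h1A
  have ht1 : t < 1 := (div_lt_one h1A).2 (by linarith)
  -- basic sequence facts
  have hN : Tendsto N atTop atTop :=
    tendsto_atTop_mono' atTop (hkN.mono fun d h => h.2.le) tendsto_id
  have hNR : Tendsto (fun d => (N d : ℝ)) atTop atTop := tendsto_natCast_atTop_atTop.comp hN
  have hNpos : ∀ᶠ d in atTop, (0:ℝ) < (N d : ℝ) := hNR.eventually_gt_atTop 0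
  have hkpos : ∀ᶠ d in atTop, 0 < k d := by
    filter_upwards [h2.eventually (eventually_ge_nhds (show ρ/2 < ρ by linarith)),
      eventually_ge_atTop 1] with d hd hd1
    by_contra hc
    push_neg at hc
    have hk0 : k d = 0 := by omega
    rw [hk0] at hd
    simp at hd
    linarith
  -- k/N → A
  have hkN' : Tendsto (fun d => (k d : ℝ)/(N d : ℝ)) atTop (𝓝 A) := by
    refine (h2.mul h1).congr' ?_
    filter_upwards [hkN, eventually_ge_atTop 1] with d hd hd1
    have hd0 : (0:ℝ) < (d:ℝ) := by exact_mod_cast hd1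
    have hN0 : (0:ℝ) < (N d:ℝ) := by
      have : 0 < N d := by omega
      exact_mod_cast this
    field_simp
  have hinv : Tendsto (fun d => ((N d:ℝ))⁻¹) atTop (𝓝 0) := tendsto_inv_atTop_zero.comp hNR
  set M : ℕ → ℕ := fun d => N d - k d - 1 with hMdef
  set mm : ℕ → ℕ := fun d => N d - d - 1 with hmmdef
  have hMN : Tendsto (fun d => (M d:ℝ)/(N d:ℝ)) atTop (𝓝 (1-A)) := by
    have base := ((tendsto_const_nhds (x := (1:ℝ))).sub hkN').sub hinv
    rw [show (1:ℝ) - A - 0 = 1 - A by ring] at base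
    refine base.congr' ?_
    filter_upwards [hkN] with d hd
    have hk1 : k d + 1 ≤ N d := by omega
    have hN0 : (0:ℝ) < (N d:ℝ) := by
      have : 0 < N d := by omega
      exact_mod_cast this
    have hcast : ((M d : ℕ):ℝ) = (N d:ℝ) - (k d:ℝ) - 1 := by
      simp only [hMdef]
      push_cast [Nat.sub_sub, Nat.cast_sub (show k d + 1 ≤ N d by omega)]
      ring
    rw [hcast]
    field_simp
  have hmmN : Tendsto (fun d => (mm d:ℝ)/(N d:ℝ)) atTop (𝓝 (1-δ)) := by
    have base := ((tendsto_const_nhds (x := (1:ℝ))).sub h1).sub hinv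
    rw [show (1:ℝ) - δ - 0 = 1 - δ by ring] at base
    refine base.congr' ?_
    filter_upwards [hkN] with d hd
    have hN0 : (0:ℝ) < (N d:ℝ) := by
      have : 0 < N d := by omega
      exact_mod_cast this
    have hcast : ((mm d : ℕ):ℝ) = (N d:ℝ) - (d:ℝ) - 1 := by
      simp only [hmmdef]
      push_cast [Nat.sub_sub, Nat.cast_sub (show d + 1 ≤ N d by omega)]
      ring
    rw [hcast]
    field_simp
  have hMinf : Tendsto M atTop atTop := by
    rw [← tendsto_natCast_atTop_iff (R := ℝ)]
    refine tendsto_atTop_mono' atTop ?_ (hNR.const_mul_atTop (show (0:ℝ) < (1-A)/2 by linarith))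
    filter_upwards [hMN.eventually (eventually_ge_nhds (show (1-A)/2 < 1-A by linarith)),
      hNpos] with d hd hp
    have := mul_le_mul_of_nonneg_right hd hp.le
    calc (1-A)/2 * (N d:ℝ) ≤ (M d:ℝ)/(N d:ℝ) * (N d:ℝ) := this
      _ = (M d:ℝ) := by field_simp
  have hmminf : Tendsto mm atTop atTop := by
    rw [← tendsto_natCast_atTop_iff (R := ℝ)]
    refine tendsto_atTop_mono' atTop ?_ (hNR.const_mul_atTop (show (0:ℝ) < (1-δ)/2 by linarith))
    filter_upwards [hmmN.eventually (eventually_ge_nhds (show (1-δ)/2 < 1-δ by linarith)),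
      hNpos] with d hd hp
    have := mul_le_mul_of_nonneg_right hd hp.le
    calc (1-δ)/2 * (N d:ℝ) ≤ (mm d:ℝ)/(N d:ℝ) * (N d:ℝ) := this
      _ = (mm d:ℝ) := by field_simp
  have hmmM : Tendsto (fun d => (mm d:ℝ)/(M d:ℝ)) atTop (𝓝 t) := by
    have base := hmmN.div hMN (ne_of_gt h1A)
    refine base.congr' ?_
    filter_upwards [hNpos, hMinf.eventually_ge_atTop 1] with d hp hM1
    have hM0 : (0:ℝ) < (M d:ℝ) := by exact_mod_cast hM1
    simp only [Pi.div_apply]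
    field_simp
  have h2m : ∀ᶠ d in atTop, 2 * mm d ≤ M d := by
    have hc0 : (0:ℝ) < (1-A) - 2*(1-δ) := by linarith
    have base := hMN.sub (hmmN.const_mul 2)
    filter_upwards [base.eventually (eventually_ge_nhds (show (0:ℝ) < (1-A) - 2*(1-δ) from hc0)),
      hNpos] with d hd hp
    have hreal : (2:ℝ) * (mm d:ℝ) ≤ (M d:ℝ) := by
      have := mul_le_mul_of_nonneg_right hd hp.le
      have hexp : ((M d:ℝ)/(N d:ℝ) - 2*((mm d:ℝ)/(N d:ℝ))) * (N d:ℝ) = (M d:ℝ) - 2*(mm d:ℝ) := by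
        field_simp
      nlinarith
    exact_mod_cast hreal
  have hev1 : ∀ᶠ d in atTop, 0 < k d ∧ k d < N d ∧ N d ≤ N d := by
    filter_upwards [hkN, hkpos] with d hd hk
    exact ⟨hk, hd.1.trans hd.2, le_refl _⟩
  have hev2 : ∀ᶠ d in atTop, 0 < mm d ∧ mm d < M d ∧ M d ≤ N d := by
    filter_upwards [hkN, hmminf.eventually_ge_atTop 1] with d hd hm1
    refine ⟨hm1, ?_, ?_⟩
    · simp only [hMdef, hmmdef]; omega
    · simp only [hMdef]; omega
  have hNN1 : Tendsto (fun d => (N d:ℝ)/(N d:ℝ)) atTop (𝓝 1) := by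
    refine tendsto_const_nhds.congr' ?_
    filter_upwards [hNpos] with d hp
    exact (div_self hp.ne').symm
  have hlogC := log_choose_tendsto N k N 1 A hA0 hA1 hev1 hN hNN1 hkN'
  have hlogM := log_choose_tendsto M mm N (1-A) t ht0 ht1 hev2 hMinf hMN hmmM
  set S : ℕ → ℝ := fun d => ∑ i ∈ Finset.range (N d - d), ((M d).choose i : ℝ) with hSdef
  have hSbound : ∀ᶠ d in atTop,
      ((M d).choose (mm d) : ℝ) ≤ S d ∧ S d ≤ (N d:ℝ) * ((M d).choose (mm d):ℝ)
        ∧ (0:ℝ) < ((M d).choose (mm d):ℝ) := by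
    filter_upwards [hkN, hev2, h2m] with d hd he hm2
    have hrange : N d - d = mm d + 1 := by simp only [hmmdef]; omega
    have hcpos : (0:ℝ) < ((M d).choose (mm d):ℝ) := by
      exact_mod_cast Nat.choose_pos he.2.1.le
    refine ⟨?_, ?_, hcpos⟩
    · rw [hSdef]
      simp only
      rw [hrange]
      exact Finset.single_le_sum (f := fun i => ((M d).choose i : ℝ))
        (fun i _ => by positivity) (Finset.self_mem_range_succ (mm d))
    · rw [hSdef]
      simp only
      rw [hrange]
      calc (∑ i ∈ Finset.range (mm d + 1), ((M d).choose i : ℝ))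
          ≤ ∑ _i ∈ Finset.range (mm d + 1), ((M d).choose (mm d) : ℝ) := by
            refine Finset.sum_le_sum fun i hi => ?_
            have hi' : i ≤ mm d := by
              have := Finset.mem_range.1 hi; omega
            exact_mod_cast choose_mono_le hi' hm2
        _ = ((mm d + 1 : ℕ):ℝ) * ((M d).choose (mm d) : ℝ) := by
            rw [Finset.sum_const, Finset.card_range]; push_cast; ring
        _ ≤ (N d:ℝ) * ((M d).choose (mm d):ℝ) := by
            refine mul_le_mul_of_nonneg_right ?_ hcpos.le
            have : mm d + 1 ≤ N d := by simp only [hmmdef]; omega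
            exact_mod_cast this
  have hlogNN : Tendsto (fun d => Real.log (N d) / (N d:ℝ)) atTop (𝓝 0) :=
    log_div_helper N N hN ((hN.eventually_ge_atTop 1).mono fun d hd => ⟨hd, le_refl _⟩)
  have hupper := hlogM.add hlogNN
  rw [add_zero] at hupper
  have hlogS : Tendsto (fun d => Real.log (S d) / (N d:ℝ)) atTop (𝓝 ((1-A) * binEnt t)) := by
    refine tendsto_of_tendsto_of_tendsto_of_le_of_le' hlogM hupper ?_ ?_
    · filter_upwards [hSbound, hNpos] with d hd hp
      exact div_le_div_of_nonneg_right (Real.log_le_log hd.2.2 hd.1) hp.le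
    · filter_upwards [hSbound, hNpos, hN.eventually_ge_atTop 1] with d hd hp hN1
      have hSpos : (0:ℝ) < S d := lt_of_lt_of_le hd.2.2 hd.1
      have hlogle : Real.log (S d) ≤ Real.log ((M d).choose (mm d)) + Real.log (N d) := by
        calc Real.log (S d) ≤ Real.log ((N d:ℝ) * ((M d).choose (mm d):ℝ)) :=
              Real.log_le_log hSpos hd.2.1
          _ = Real.log (N d) + Real.log ((M d).choose (mm d)) :=
              Real.log_mul hp.ne' hd.2.2.ne'
          _ = _ := by ring
      calc Real.log (S d) / (N d:ℝ) ≤ (Real.log ((M d).choose (mm d)) + Real.log (N d)) / (N d:ℝ) :=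
            div_le_div_of_nonneg_right hlogle hp.le
        _ = Real.log ((M d).choose (mm d)) / (N d:ℝ) + Real.log (N d) / (N d:ℝ) := by ring
  have hΔeq : ∀ᶠ d in atTop,
      Real.log (DeltaD k N d) / (N d:ℝ) =
        Real.log ((N d).choose (k d)) / (N d:ℝ) - ((M d:ℝ)/(N d:ℝ)) * Real.log 2
          + Real.log (S d) / (N d:ℝ) ∧ 0 < DeltaD k N d := by
    filter_upwards [hkN, hSbound, hev1] with d hd hS he1
    have hC : (0:ℝ) < ((N d).choose (k d) : ℝ) := by
      exact_mod_cast Nat.choose_pos (he1.2.1.le)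
    have hSpos : (0:ℝ) < S d := lt_of_lt_of_le hS.2.2 hS.1
    have h2p : (0:ℝ) < (2:ℝ)^(M d) := by positivity
    have hDval : DeltaD k N d = ((N d).choose (k d) : ℝ) / 2 ^ (M d) * S d := rfl
    have hDpos : 0 < DeltaD k N d := by
      rw [hDval]; positivity
    refine ⟨?_, hDpos⟩
    rw [hDval, Real.log_mul (by positivity) hSpos.ne', Real.log_div hC.ne' h2p.ne',
      Real.log_pow]
    ring
  have hE : 1 * binEnt A - (1-A) * Real.log 2 + (1-A) * binEnt t = Gfun δ ρ := by
    have hid := entropy_identity hδ0 hδ1 hρ0 hρ1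
    rw [← hAdef] at hid
    rw [← htdef] at hid
    unfold Gfun
    have hcomm : δ * ρ = A := by rw [hAdef]; ring
    rw [hcomm]
    linarith [hid]
  have hfull : Tendsto (fun d => Real.log (DeltaD k N d) / (N d:ℝ)) atTop (𝓝 (Gfun δ ρ)) := by
    have base := (hlogC.sub (hMN.mul_const (Real.log 2))).add hlogS
    rw [hE] at base
    refine base.congr' ?_
    filter_upwards [hΔeq] with d hd
    exact hd.1.symm
  have hΔnonneg : ∀ d, 0 ≤ DeltaD k N d := by
    intro d
    unfold DeltaD
    positivity
  constructor
  · intro hG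
    have hub : ∀ᶠ d in atTop, DeltaD k N d ≤ Real.exp ((d:ℝ) * (Gfun δ ρ/2)) := by
      filter_upwards [hfull.eventually (eventually_le_nhds (show Gfun δ ρ < Gfun δ ρ/2 by linarith)),
        hΔeq, hkN, hNpos] with d hle hd hk hp
      have hdN : (d:ℝ) ≤ (N d:ℝ) := by exact_mod_cast hk.2.le
      have hlog1 : Real.log (DeltaD k N d) ≤ (N d:ℝ) * (Gfun δ ρ/2) := by
        have := mul_le_mul_of_nonneg_right hle hp.le
        calc Real.log (DeltaD k N d) = Real.log (DeltaD k N d) / (N d:ℝ) * (N d:ℝ) := by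
              field_simp
          _ ≤ Gfun δ ρ/2 * (N d:ℝ) := mul_le_mul_of_nonneg_right hle hp.le
          _ = (N d:ℝ) * (Gfun δ ρ/2) := by ring
      have hlog2 : Real.log (DeltaD k N d) ≤ (d:ℝ) * (Gfun δ ρ/2) := by
        have hmul : (N d:ℝ) * (Gfun δ ρ/2) ≤ (d:ℝ) * (Gfun δ ρ/2) :=
          mul_le_mul_of_nonpos_right hdN (by linarith)
        linarith
      calc DeltaD k N d = Real.exp (Real.log (DeltaD k N d)) := (Real.exp_log hd.2).symm
        _ ≤ Real.exp ((d:ℝ) * (Gfun δ ρ/2)) := Real.exp_le_exp.2 hlog2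
    have hexp0 : Tendsto (fun d : ℕ => Real.exp ((d:ℝ) * (Gfun δ ρ/2))) atTop (𝓝 0) :=
      Real.tendsto_exp_atBot.comp (tendsto_natCast_atTop_atTop.atTop_mul_const_of_neg (by linarith))
    exact tendsto_of_tendsto_of_tendsto_of_le_of_le' tendsto_const_nhds hexp0
      (Eventually.of_forall fun d => hΔnonneg d) hub
  · intro hG
    have hlb : ∀ᶠ d : ℕ in atTop, Real.exp ((d:ℝ) * (Gfun δ ρ/2)) ≤ DeltaD k N d := by
      filter_upwards [hfull.eventually (eventually_ge_nhds (show Gfun δ ρ/2 < Gfun δ ρ by linarith)),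
        hΔeq, hkN, hNpos] with d hge hd hk hp
      have hdN : (d:ℝ) ≤ (N d:ℝ) := by exact_mod_cast hk.2.le
      have hlog1 : (N d:ℝ) * (Gfun δ ρ/2) ≤ Real.log (DeltaD k N d) := by
        calc (N d:ℝ) * (Gfun δ ρ/2) = Gfun δ ρ/2 * (N d:ℝ) := by ring
          _ ≤ Real.log (DeltaD k N d) / (N d:ℝ) * (N d:ℝ) := mul_le_mul_of_nonneg_right hge hp.le
          _ = Real.log (DeltaD k N d) := by field_simp
      have hlog2 : (d:ℝ) * (Gfun δ ρ/2) ≤ Real.log (DeltaD k N d) := by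
        have hmul : (d:ℝ) * (Gfun δ ρ/2) ≤ (N d:ℝ) * (Gfun δ ρ/2) :=
          mul_le_mul_of_nonneg_right hdN (by linarith)
        linarith
      calc Real.exp ((d:ℝ) * (Gfun δ ρ/2)) ≤ Real.exp (Real.log (DeltaD k N d)) :=
            Real.exp_le_exp.2 hlog2
        _ = DeltaD k N d := Real.exp_log hd.2
    exact tendsto_atTop_mono' atTop hlb
      (Real.tendsto_exp_atTop.comp (tendsto_natCast_atTop_atTop.atTop_mul_const (by linarith)))
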